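/- Let X, Z ∈ ℝ^{n×r} with XᵀZ positive semidefinite, M* = ZZᵀ, XXᵀ ≠ ZZᵀ, λ_r(M*) > 0, and ‖XXᵀ - M*‖_F ≤ ε·λ_r(M*) with 0 < ε ≤ 2(√2-1). Write Z = c₁X + c₂W with ⟨X,W⟩ = 0, ‖W‖_F = 1, and set Y = ((1-c₁²)/2)X - c₁c₂W. Then ‖XXᵀ - ZZᵀ - (XYᵀ + YXᵀ)‖_F ≤ c₂² ≤ ‖X - Z‖_F², and consequently, letting θ be the angle between vec(XXᵀ - ZZᵀ) and vec(XYᵀ + YXᵀ), sin θ ≤ ε/(2(√2-1)) ≤ 1. -/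

import Mathlib

open Matrix

noncomputable def frob {m n : Type*} [Fintype m] [Fintype n] (A : Matrix m n ℝ) : ℝ :=
  Real.sqrt (∑ i, ∑ j, (A i j)^2)

def finner {m n : Type*} [Fintype m] [Fintype n] (A B : Matrix m n ℝ) : ℝ :=
  ∑ i, ∑ j, A i j * B i j

/-- The `k`-th largest eigenvalue (1-indexed) of a Hermitian real matrix. -/
noncomputable def kthLargestEig {n : ℕ} (A : Matrix (Fin n) (Fin n) ℝ)
    (hA : A.IsHermitian) (k : ℕ) : ℝ :=
  ((Finset.univ.val.map hA.eigenvalues).sort (· ≤ ·)).getD (n - k) 0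

/-!
Put `H = X - Z`. The residual `XXᵀ - ZZᵀ - (XYᵀ + YXᵀ)` equals `-c₂² WWᵀ`, of norm at most `c₂²`,
and `‖X - Z‖² = (1 - c₁)²‖X‖² + c₂²` by orthogonality. Since `sin θ ≤ ‖e - b‖ / ‖e‖` for
`e = vec (XXᵀ - ZZᵀ)`, the angle bound follows from `2(√2 - 1) λ ‖H‖² ≤ ‖XXᵀ - ZZᵀ‖²`. With the
symmetric matrix `S = ZᵀH`,
  `‖XXᵀ - ZZᵀ‖² = ‖HᵀH + √2 S‖² + (4 - 2√2) tr (HᵀH ZᵀX) + 2(√2 - 1) ‖ZHᵀ‖²`,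
and the trace is nonnegative because `ZᵀX ⪰ 0`. Finally `‖ZHᵀ‖² ≥ λ ‖H‖²`: as `rank (ZZᵀ) ≤ r`,
every nonzero eigenvalue of `M = ZZᵀ` is at least `λ = λ_r(M)`, so `M² ⪰ λ M`; and `λ > 0` forces
`Z` to have full rank, which together with `ZᵀX = XᵀZ` gives `X = KZ`, i.e. `Hᵀ = Zᵀ (K - 1)ᵀ`.
-/

open scoped RealInnerProductSpace

section InnerProductSpace

variable {E : Type*} [NormedAddCommGroup E] [InnerProductSpace ℝ E]

theorem one_sub_sq_inner_div_mul_norm_le (a b : E) :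
    (1 - (⟪a, b⟫ / (‖a‖ * ‖b‖)) ^ 2) * ‖a‖ ^ 2 ≤ ‖a - b‖ ^ 2 := by
  rw [norm_sub_sq_real]
  rcases eq_or_ne b 0 with rfl | hb
  · simp
  rcases eq_or_ne a 0 with rfl | ha
  · simp
  have hb' : 0 < ‖b‖ := norm_pos_iff.mpr hb
  have ha' : 0 < ‖a‖ := norm_pos_iff.mpr ha
  have key : (1 - (⟪a, b⟫ / (‖a‖ * ‖b‖)) ^ 2) * ‖a‖ ^ 2 = ‖a‖ ^ 2 - (⟪a, b⟫ / ‖b‖) ^ 2 := by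
    field_simp
  rw [key]
  nlinarith [sq_nonneg (⟪a, b⟫ / ‖b‖ - ‖b‖), div_mul_cancel₀ ⟪a, b⟫ hb'.ne']

theorem sqrt_one_sub_sq_inner_div_le {a : E} (ha : a ≠ 0) (b : E) :
    √(1 - (⟪a, b⟫ / (‖a‖ * ‖b‖)) ^ 2) ≤ ‖a - b‖ / ‖a‖ := by
  have ha' : 0 < ‖a‖ := norm_pos_iff.mpr ha
  rw [Real.sqrt_le_left (by positivity), div_pow ‖a - b‖, le_div_iff₀ (by positivity)]
  exact one_sub_sq_inner_div_mul_norm_le a b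

end InnerProductSpace

section Frobenius

variable {l m n : Type*}

def euclideanVec (A : Matrix m n ℝ) : EuclideanSpace ℝ (n × m) := WithLp.toLp 2 A.vec

@[simp]
theorem euclideanVec_sub (A B : Matrix m n ℝ) :
    euclideanVec (A - B) = euclideanVec A - euclideanVec B := rfl

@[simp]
theorem euclideanVec_smul (c : ℝ) (A : Matrix m n ℝ) :
    euclideanVec (c • A) = c • euclideanVec A := rfl

theorem euclideanVec_ne_zero {A : Matrix m n ℝ} (hA : A ≠ 0) : euclideanVec A ≠ 0 := by
  simpa [euclideanVec, vec_eq_zero_iff] using hA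

variable [Fintype l] [Fintype m] [Fintype n]

theorem finner_eq_inner (A B : Matrix m n ℝ) :
    finner A B = ⟪euclideanVec A, euclideanVec B⟫ := by
  simp only [finner, euclideanVec, PiLp.inner_apply, Matrix.vec, Fintype.sum_prod_type]
  rw [Finset.sum_comm]
  simp [mul_comm]

theorem frob_eq_norm (A : Matrix m n ℝ) : frob A = ‖euclideanVec A‖ := by
  simp only [frob, EuclideanSpace.norm_eq, euclideanVec, Matrix.vec, Fintype.sum_prod_type,
    Real.norm_eq_abs, sq_abs]
  rw [Finset.sum_comm]

theorem frob_sq_eq_trace (A : Matrix m n ℝ) : frob A ^ 2 = trace (Aᵀ * A) := by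
  rw [frob_eq_norm, ← real_inner_self_eq_norm_sq, ← finner_eq_inner]
  simp only [finner, trace, diag, mul_apply, transpose_apply]
  exact Finset.sum_comm

theorem frob_transpose (A : Matrix m n ℝ) : frob Aᵀ = frob A := by
  simp only [frob, transpose_apply]
  rw [Finset.sum_comm]

theorem frob_smul (c : ℝ) (A : Matrix m n ℝ) : frob (c • A) = |c| * frob A := by
  rw [frob_eq_norm, frob_eq_norm, euclideanVec_smul, norm_smul, Real.norm_eq_abs]

theorem frob_pos {A : Matrix m n ℝ} (hA : A ≠ 0) : 0 < frob A :=
  frob_eq_norm A ▸ norm_pos_iff.mpr (euclideanVec_ne_zero hA)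

section FrobeniusNorm

attribute [local instance] Matrix.frobeniusNormedAddCommGroup

theorem frob_eq_frobenius_norm (A : Matrix m n ℝ) : frob A = ‖A‖ := by
  simp [frob, frobenius_norm_def, Real.sqrt_eq_rpow]

theorem frob_mul_le (A : Matrix l m ℝ) (B : Matrix m n ℝ) : frob (A * B) ≤ frob A * frob B := by
  simpa only [frob_eq_frobenius_norm] using frobenius_norm_mul A B

end FrobeniusNorm

theorem sqrt_one_sub_sq_finner_div_le {A : Matrix m n ℝ} (hA : A ≠ 0) (B : Matrix m n ℝ) :
    √(1 - (finner A B / (frob A * frob B)) ^ 2) ≤ frob (A - B) / frob A := by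
  simp only [finner_eq_inner, frob_eq_norm, euclideanVec_sub]
  exact sqrt_one_sub_sq_inner_div_le (euclideanVec_ne_zero hA) _

end Frobenius

theorem Matrix.PosSemidef.transpose_mul_comm {m n : Type*} [Fintype m]
    {X Z : Matrix m n ℝ} (h : (Xᵀ * Z).PosSemidef) : Zᵀ * X = Xᵀ * Z := by
  simpa [conjTranspose_eq_transpose_of_trivial] using h.1.eq

section Trace

variable {l m n : Type*} [Fintype l] [Fintype m] [Fintype n]

theorem trace_mul_transpose_mul_mul_transpose {R : Type*} [CommSemiring R]
    (A B C D : Matrix m n R) : trace (A * Bᵀ * (C * Dᵀ)) = trace (Dᵀ * A * (Bᵀ * C)) := by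
  rw [← Matrix.mul_assoc, trace_mul_comm]
  simp only [Matrix.mul_assoc]

theorem frob_sq_add_mul_transpose_sub_mul_transpose {H Z : Matrix m n ℝ}
    (hsymm : Hᵀ * Z = Zᵀ * H) :
    frob ((H + Z) * (H + Z)ᵀ - Z * Zᵀ) ^ 2 = trace (Hᵀ * H * (Hᵀ * H))
      + 4 * trace (Hᵀ * H * (Zᵀ * H)) + 2 * trace (Zᵀ * H * (Zᵀ * H))
      + 2 * trace (Hᵀ * H * (Zᵀ * Z)) := by
  have hC : (H + Z) * (H + Z)ᵀ - Z * Zᵀ = H * Hᵀ + H * Zᵀ + Z * Hᵀ := by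
    simp only [transpose_add, Matrix.add_mul, Matrix.mul_add]; abel
  rw [frob_sq_eq_trace, hC]
  simp only [transpose_add, transpose_mul, transpose_transpose, Matrix.add_mul, Matrix.mul_add,
    trace_add, trace_mul_transpose_mul_mul_transpose, hsymm]
  rw [trace_mul_comm (Zᵀ * H) (Hᵀ * H), trace_mul_comm (Zᵀ * Z) (Hᵀ * H)]
  ring

theorem two_mul_sqrt_two_sub_one_mul_frob_sq_le
    {X Z : Matrix m n ℝ} (hXZ : (Xᵀ * Z).PosSemidef) :
    2 * (√2 - 1) * frob (Z * (X - Z)ᵀ) ^ 2 ≤ frob (X * Xᵀ - Z * Zᵀ) ^ 2 := by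
  have hQ : (Zᵀ * X).PosSemidef := hXZ.transpose_mul_comm ▸ hXZ
  obtain ⟨H, rfl⟩ : ∃ H, X = H + Z := ⟨X - Z, by simp⟩
  have hsymm : Hᵀ * Z = Zᵀ * H := by
    simpa [Matrix.add_mul, Matrix.mul_add] using hXZ.transpose_mul_comm.symm
  have hsquare : 0 ≤ trace (Hᵀ * H * (Hᵀ * H)) + 2 * √2 * trace (Hᵀ * H * (Zᵀ * H))
      + 2 * trace (Zᵀ * H * (Zᵀ * H)) := by
    have h := sq_nonneg (frob (Hᵀ * H + √2 • (Zᵀ * H)))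
    rw [frob_sq_eq_trace] at h
    simp only [transpose_add, transpose_smul, transpose_mul, transpose_transpose, hsymm,
      Matrix.add_mul, Matrix.mul_add, Matrix.smul_mul, Matrix.mul_smul, trace_add, trace_smul,
      smul_eq_mul] at h
    rw [trace_mul_comm (Zᵀ * H) (Hᵀ * H)] at h
    linear_combination h + trace (Zᵀ * H * (Zᵀ * H)) * Real.mul_self_sqrt zero_le_two
  have hcross : 0 ≤ trace (Hᵀ * H * (Zᵀ * H)) + trace (Hᵀ * H * (Zᵀ * Z)) := by
    rw [← trace_add, ← Matrix.mul_add, ← Matrix.mul_add, ← trace_mul_cycle]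
    simpa [conjTranspose_eq_transpose_of_trivial] using
      (hQ.mul_mul_conjTranspose_same H).trace_nonneg
  have hZH : frob (Z * ((H + Z) - Z)ᵀ) ^ 2 = trace (Hᵀ * H * (Zᵀ * Z)) := by
    rw [add_sub_cancel_right, frob_sq_eq_trace, transpose_mul, transpose_transpose]
    exact trace_mul_transpose_mul_mul_transpose H Z Z H
  have hsqrt : √2 ≤ 2 := by
    nlinarith [Real.sq_sqrt (show (0 : ℝ) ≤ 2 by norm_num), Real.sqrt_nonneg 2]
  rw [frob_sq_add_mul_transpose_sub_mul_transpose hsymm, hZH]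
  nlinarith [mul_nonneg (sub_nonneg.mpr hsqrt) hcross]

theorem mul_frob_transpose_mul_sq_le (Z : Matrix m n ℝ) {c : ℝ}
    (h : (Z * Zᵀ * (Z * Zᵀ) - c • (Z * Zᵀ)).PosSemidef) (A : Matrix m l ℝ) :
    c * frob (Zᵀ * A) ^ 2 ≤ frob (Z * Zᵀ * A) ^ 2 := by
  have := (h.conjTranspose_mul_mul_same A).trace_nonneg
  simp only [conjTranspose_eq_transpose_of_trivial, Matrix.mul_sub, Matrix.sub_mul,
    Matrix.mul_smul, Matrix.smul_mul, trace_sub, trace_smul, smul_eq_mul] at this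
  rw [frob_sq_eq_trace, frob_sq_eq_trace]
  simp only [transpose_mul, transpose_transpose, Matrix.mul_assoc] at this ⊢
  linarith

end Trace

theorem Matrix.IsHermitian.posSemidef_mul_self_sub_smul {n : Type*} [Fintype n] [DecidableEq n]
    {A : Matrix n n ℝ} (hA : A.IsHermitian) {c : ℝ} (hc : 0 ≤ c)
    (h : ∀ i, hA.eigenvalues i ≠ 0 → c ≤ hA.eigenvalues i) :
    (A * A - c • A).PosSemidef := by
  set U : Matrix n n ℝ := (hA.eigenvectorUnitary : Matrix n n ℝ)
  have hUU : star U * U = 1 := Unitary.coe_star_mul_self _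
  have hspec : A = U * diagonal hA.eigenvalues * star U := by
    simpa [RCLike.ofReal_real_eq_id] using hA.spectral_theorem
  have hdiag : A * A - c • A =
      U * diagonal (fun i => hA.eigenvalues i * (hA.eigenvalues i - c)) * Uᴴ := by
    set d := hA.eigenvalues
    calc A * A - c • A
        = U * (diagonal d * (star U * U) * diagonal d - c • diagonal d) * star U := by
          rw [hspec]
          simp only [Matrix.mul_sub, Matrix.sub_mul, Matrix.mul_smul, Matrix.smul_mul,
            Matrix.mul_assoc]
      _ = _ := by
          rw [hUU, Matrix.mul_one, diagonal_mul_diagonal, ← diagonal_smul, diagonal_sub,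
            star_eq_conjTranspose]
          simp only [Pi.smul_apply, smul_eq_mul, mul_sub, mul_comm c]
  rw [hdiag]
  refine (posSemidef_diagonal_iff.mpr fun i => ?_).mul_mul_conjTranspose_same U
  by_cases hi : hA.eigenvalues i = 0
  · simp [hi]
  · have := h i hi
    nlinarith

theorem exists_eq_mul_of_min_card_le_rank {m n : Type*} [Fintype m] [Fintype n] [DecidableEq m]
    [DecidableEq n] {X Z : Matrix m n ℝ} (hsymm : Zᵀ * X = Xᵀ * Z)
    (hrank : min (Fintype.card n) (Fintype.card m) ≤ Z.rank) :
    ∃ K : Matrix m m ℝ, X = K * Z := by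
  rcases le_total (Fintype.card n) (Fintype.card m) with h | h
  · have hinj : Function.Injective Z.mulVec := by
      rw [mulVec_injective_iff, linearIndependent_iff_card_le_finrank_span, Set.finrank,
        ← rank_eq_finrank_span_cols]
      omega
    have hG : IsUnit (Zᵀ * Z).det := by
      simpa using (isUnit_iff_isUnit_det _).mp (PosDef.conjTranspose_mul_self Z hinj).isUnit
    refine ⟨X * (Zᵀ * Z)⁻¹ * Zᵀ, ?_⟩
    rw [Matrix.mul_assoc, Matrix.mul_assoc, nonsing_inv_mul _ hG, Matrix.mul_one]
  · have hinj : Function.Injective Z.vecMul := by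
      rw [vecMul_injective_iff, linearIndependent_iff_card_le_finrank_span, Set.finrank,
        ← rank_eq_finrank_span_row]
      omega
    have hM : IsUnit (Z * Zᵀ).det := by
      simpa using (isUnit_iff_isUnit_det _).mp (PosDef.mul_conjTranspose_self Z hinj).isUnit
    refine ⟨(Z * Zᵀ)⁻¹ * Z * Xᵀ, ?_⟩
    rw [Matrix.mul_assoc, ← hsymm, ← Matrix.mul_assoc, Matrix.mul_assoc _ Z, nonsing_inv_mul _ hM,
      Matrix.one_mul]

section KthLargest

open Finset

variable {n : ℕ} {A : Matrix (Fin n) (Fin n) ℝ} (hA : A.IsHermitian) {k : ℕ}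

theorem min_le_card_kthLargestEig_le :
    min k n ≤ #{i | kthLargestEig A hA k ≤ hA.eigenvalues i} := by
  set L := (univ.val.map hA.eigenvalues).sort (· ≤ ·)
  have hlen : L.length = n := by simp [L]
  rcases (Nat.lt_or_ge (n - k) n).symm with hk | hk
  · omega
  have hk' : n - k < L.length := hlen ▸ hk
  have hlam : kthLargestEig A hA k = L[n - k] := List.getD_eq_getElem _ _ hk'
  have hdrop : ∀ x ∈ L.drop (n - k), L[n - k] ≤ x := by
    have hpw := (Multiset.pairwise_sort _ (· ≤ ·)).sublist (List.drop_sublist (n - k) L)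
    rw [List.drop_eq_getElem_cons hk', List.pairwise_cons] at hpw
    rw [List.drop_eq_getElem_cons hk']
    rintro x (_ | ⟨_, hx⟩)
    exacts [le_rfl, hpw.1 x hx]
  calc min k n = (L.drop (n - k)).length := by simp [hlen]; omega
    _ = (L.drop (n - k)).countP (fun x => decide (kthLargestEig A hA k ≤ x)) :=
      (List.countP_eq_length.mpr fun x hx => by simpa [hlam] using hdrop x hx).symm
    _ ≤ L.countP (fun x => decide (kthLargestEig A hA k ≤ x)) :=
      (List.drop_sublist _ _).countP_le
    _ = #{i | kthLargestEig A hA k ≤ hA.eigenvalues i} := by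
      rw [← Multiset.coe_countP, Multiset.sort_eq, Multiset.countP_map, card_def, filter_val]

include hA in
theorem card_eigenvalues_ne_zero_eq_rank :
    #{i | hA.eigenvalues i ≠ 0} = A.rank := by
  rw [hA.rank_eq_card_non_zero_eigs, Fintype.card_subtype]

theorem card_kthLargestEig_le_le_rank (hpos : 0 < kthLargestEig A hA k) :
    #{i | kthLargestEig A hA k ≤ hA.eigenvalues i} ≤ A.rank := by
  rw [← card_eigenvalues_ne_zero_eq_rank hA]
  exact card_le_card fun i hi => by simp at hi ⊢; linarith

theorem min_le_rank_of_kthLargestEig_pos (hpos : 0 < kthLargestEig A hA k) : min k n ≤ A.rank :=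
  (min_le_card_kthLargestEig_le hA).trans (card_kthLargestEig_le_le_rank hA hpos)

theorem kthLargestEig_le_of_eigenvalues_ne_zero (hrank : A.rank ≤ k)
    (hpos : 0 < kthLargestEig A hA k) {i : Fin n} (hi : hA.eigenvalues i ≠ 0) :
    kthLargestEig A hA k ≤ hA.eigenvalues i := by
  set S := univ.filter fun i => kthLargestEig A hA k ≤ hA.eigenvalues i
  set T := univ.filter fun i => hA.eigenvalues i ≠ 0
  have hST : S ⊆ T := fun i hi => by simp [S, T] at hi ⊢; linarith
  have hTS : #T ≤ #S := by
    rw [card_eigenvalues_ne_zero_eq_rank hA]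
    exact (le_min hrank (rank_le_height A)).trans (min_le_card_kthLargestEig_le hA)
  have hiS : i ∈ S := eq_of_subset_of_card_le hST hTS ▸ mem_filter.mpr ⟨mem_univ i, hi⟩
  exact (mem_filter.mp hiS).2

end KthLargest

theorem kthLargestEig_mul_frob_sub_sq_le {n r : ℕ} {X Z : Matrix (Fin n) (Fin r) ℝ}
    (hXZ : (Xᵀ * Z).PosSemidef) (hherm : (Z * Zᵀ).IsHermitian)
    (hpos : 0 < kthLargestEig (Z * Zᵀ) hherm r) :
    kthLargestEig (Z * Zᵀ) hherm r * frob (X - Z) ^ 2 ≤ frob (Z * (X - Z)ᵀ) ^ 2 := by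
  have hrank : (Z * Zᵀ).rank ≤ r := (rank_mul_le_left _ _).trans (rank_le_width Z)
  have hM := hherm.posSemidef_mul_self_sub_smul hpos.le fun _ hi =>
    kthLargestEig_le_of_eigenvalues_ne_zero hherm hrank hpos hi
  obtain ⟨K, hK⟩ := exists_eq_mul_of_min_card_le_rank hXZ.transpose_mul_comm <| by
    simpa [rank_self_mul_transpose] using min_le_rank_of_kthLargestEig_pos hherm hpos
  have hH : (X - Z)ᵀ = Zᵀ * (K - 1)ᵀ := by
    rw [← transpose_mul, Matrix.sub_mul, Matrix.one_mul, ← hK]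
  rw [← frob_transpose (X - Z), hH, ← Matrix.mul_assoc]
  exact mul_frob_transpose_mul_sq_le Z hM _

section Residual

variable {m n : Type*} [Fintype n] {X Z W Y : Matrix m n ℝ} {c₁ c₂ : ℝ}

theorem residual_eq_neg_sq_smul (hZ : Z = c₁ • X + c₂ • W)
    (hY : Y = ((1 - c₁ ^ 2) / 2) • X - (c₁ * c₂) • W) :
    X * Xᵀ - Z * Zᵀ - (X * Yᵀ + Y * Xᵀ) = -(c₂ ^ 2) • (W * Wᵀ) := by
  subst hZ hY
  simp only [transpose_add, transpose_sub, transpose_smul, Matrix.add_mul, Matrix.mul_add,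
    Matrix.sub_mul, Matrix.mul_sub, Matrix.smul_mul, Matrix.mul_smul]
  module

theorem frob_residual_le [Fintype m] (hZ : Z = c₁ • X + c₂ • W)
    (hY : Y = ((1 - c₁ ^ 2) / 2) • X - (c₁ * c₂) • W) (hW : frob W = 1) :
    frob (X * Xᵀ - Z * Zᵀ - (X * Yᵀ + Y * Xᵀ)) ≤ c₂ ^ 2 := by
  rw [residual_eq_neg_sq_smul hZ hY, frob_smul, abs_neg, abs_sq]
  calc c₂ ^ 2 * frob (W * Wᵀ) ≤ c₂ ^ 2 * (frob W * frob Wᵀ) := by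
        gcongr; exact frob_mul_le W Wᵀ
    _ = c₂ ^ 2 := by rw [frob_transpose, hW, mul_one, mul_one]

theorem sq_le_frob_sub_sq [Fintype m] (hZ : Z = c₁ • X + c₂ • W) (hXW : finner X W = 0)
    (hW : frob W = 1) : c₂ ^ 2 ≤ frob (X - Z) ^ 2 := by
  have hXZ : X - Z = (1 - c₁) • X - c₂ • W := by rw [hZ]; module
  rw [finner_eq_inner] at hXW
  rw [frob_eq_norm] at hW
  rw [hXZ, frob_eq_norm, euclideanVec_sub, euclideanVec_smul, euclideanVec_smul, norm_sub_sq_real,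
    inner_smul_left, inner_smul_right, hXW, norm_smul, norm_smul, hW]
  simp only [mul_zero, Real.norm_eq_abs]
  nlinarith [sq_abs c₂, sq_nonneg (|1 - c₁| * ‖euclideanVec X‖)]

end Residual

theorem stmt_15_general {n r : ℕ} (X Z W : Matrix (Fin n) (Fin r) ℝ) (c₁ c₂ ε : ℝ)
    (hpsd : (Xᵀ * Z).PosSemidef)
    (hne : X * Xᵀ ≠ Z * Zᵀ)
    (hherm : (Z * Zᵀ).IsHermitian)
    (hlam : 0 < kthLargestEig (Z * Zᵀ) hherm r)
    (hZ : Z = c₁ • X + c₂ • W)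
    (hXW : finner X W = 0) (hWnorm : frob W = 1)
    (hε1 : ε ≤ 2 * (Real.sqrt 2 - 1))
    (hclose : frob (X * Xᵀ - Z * Zᵀ) ≤ ε * kthLargestEig (Z * Zᵀ) hherm r)
    (Y : Matrix (Fin n) (Fin r) ℝ) (hY : Y = ((1 - c₁ ^ 2) / 2) • X - (c₁ * c₂) • W)
    (cosθ : ℝ)
    (hcos : cosθ = finner (X * Xᵀ - Z * Zᵀ) (X * Yᵀ + Y * Xᵀ) /
      (frob (X * Xᵀ - Z * Zᵀ) * frob (X * Yᵀ + Y * Xᵀ))) :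
    frob (X * Xᵀ - Z * Zᵀ - (X * Yᵀ + Y * Xᵀ)) ≤ c₂ ^ 2 ∧
      c₂ ^ 2 ≤ frob (X - Z) ^ 2 ∧
      Real.sqrt (1 - cosθ ^ 2) ≤ ε / (2 * (Real.sqrt 2 - 1)) ∧
      ε / (2 * (Real.sqrt 2 - 1)) ≤ 1 := by
  set lam := kthLargestEig (Z * Zᵀ) hherm r
  have hres := frob_residual_le hZ hY hWnorm
  have hc₂ := sq_le_frob_sub_sq hZ hXW hWnorm
  have hκ : 0 < 2 * (√2 - 1) := by
    have : 1 < √2 := by rw [Real.lt_sqrt zero_le_one]; norm_num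
    linarith
  have hC : 0 < frob (X * Xᵀ - Z * Zᵀ) := frob_pos (sub_ne_zero.mpr hne)
  have hcurv : 2 * (√2 - 1) * (lam * frob (X - Z) ^ 2) ≤ frob (X * Xᵀ - Z * Zᵀ) ^ 2 :=
    (mul_le_mul_of_nonneg_left (kthLargestEig_mul_frob_sub_sq_le hpsd hherm hlam) hκ.le).trans
      (two_mul_sqrt_two_sub_one_mul_frob_sq_le hpsd)
  refine ⟨hres, hc₂, ?_, (div_le_one hκ).mpr hε1⟩
  rw [hcos]
  refine (sqrt_one_sub_sq_finner_div_le (sub_ne_zero.mpr hne) _).trans ?_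
  rw [div_le_div_iff₀ hC hκ]
  refine le_of_mul_le_mul_left ?_ hlam
  nlinarith [mul_le_mul_of_nonneg_left hclose hC.le, mul_le_mul_of_nonneg_left hres hlam.le,
    mul_le_mul_of_nonneg_left hc₂ hlam.le]

theorem stmt_15 {n r : ℕ} (X Z W : Matrix (Fin n) (Fin r) ℝ) (c₁ c₂ ε : ℝ)
    (hpsd : (Xᵀ * Z).PosSemidef)
    (hne : X * Xᵀ ≠ Z * Zᵀ)
    (hherm : (Z * Zᵀ).IsHermitian)
    (hlam : 0 < kthLargestEig (Z * Zᵀ) hherm r)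
    (hZ : Z = c₁ • X + c₂ • W)
    (hXW : finner X W = 0) (hWnorm : frob W = 1)
    (hε0 : 0 < ε) (hε1 : ε ≤ 2 * (Real.sqrt 2 - 1))
    (hclose : frob (X * Xᵀ - Z * Zᵀ) ≤ ε * kthLargestEig (Z * Zᵀ) hherm r)
    (Y : Matrix (Fin n) (Fin r) ℝ) (hY : Y = ((1 - c₁ ^ 2) / 2) • X - (c₁ * c₂) • W)
    (cosθ : ℝ)
    (hcos : cosθ = finner (X * Xᵀ - Z * Zᵀ) (X * Yᵀ + Y * Xᵀ) /
      (frob (X * Xᵀ - Z * Zᵀ) * frob (X * Yᵀ + Y * Xᵀ))) :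
    frob (X * Xᵀ - Z * Zᵀ - (X * Yᵀ + Y * Xᵀ)) ≤ c₂ ^ 2 ∧
      c₂ ^ 2 ≤ frob (X - Z) ^ 2 ∧
      Real.sqrt (1 - cosθ ^ 2) ≤ ε / (2 * (Real.sqrt 2 - 1)) ∧
      ε / (2 * (Real.sqrt 2 - 1)) ≤ 1 :=
  stmt_15_general X Z W c₁ c₂ ε hpsd hne hherm hlam hZ hXW hWnorm hε1 hclose Y hY cosθ hcos
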